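/- Let A, B be self-adjoint operators on a finite-dimensional Hilbert space and T a completely positive trace-preserving map. Then Tr[{T(A) ≥ T(B)} (T(A) − T(B))] ≤ Tr[{A ≥ B}(A − B)], i.e., the 'positive-part trace' Tr[(A−B)₊-projected difference] is non-increasing under CPTP maps. -/

import Mathlib

open Matrix Kronecker BigOperators
open scoped ComplexOrder

/-- Projection onto the nonnegative eigenspace of a Hermitian matrix
(junk value `0` if the matrix is not Hermitian). -/
noncomputable def posProj {n : Type*} [Fintype n] [DecidableEq n]
    (X : Matrix n n ℂ) : Matrix n n ℂ :=
  if hX : X.IsHermitian then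
    (hX.eigenvectorUnitary : Matrix n n ℂ) *
      Matrix.diagonal (fun i => if (0:ℝ) ≤ hX.eigenvalues i then (1:ℂ) else 0) *
      star (hX.eigenvectorUnitary : Matrix n n ℂ)
  else 0

/-- Functional calculus logarithm of a Hermitian matrix, with the convention `log 0 = 0`
(junk value `0` if the matrix is not Hermitian). -/
noncomputable def matLog {n : Type*} [Fintype n] [DecidableEq n]
    (M : Matrix n n ℂ) : Matrix n n ℂ :=
  if hM : M.IsHermitian then
    (hM.eigenvectorUnitary : Matrix n n ℂ) *
      Matrix.diagonal (fun i => (Real.log (hM.eigenvalues i) : ℂ)) *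
      star (hM.eigenvectorUnitary : Matrix n n ℂ)
  else 0

/-- von Neumann entropy `-Tr[M log M] = -∑ λᵢ log λᵢ` (convention `0 log 0 = 0`). -/
noncomputable def vNEntropy {n : Type*} [Fintype n] [DecidableEq n]
    (M : Matrix n n ℂ) : ℝ :=
  if hM : M.IsHermitian then -∑ i, hM.eigenvalues i * Real.log (hM.eigenvalues i) else 0

/-- A density operator: positive semidefinite with unit trace. -/
def IsDensityOp {n : Type*} [Fintype n] [DecidableEq n] (ρ : Matrix n n ℂ) : Prop :=
  ρ.PosSemidef ∧ ρ.trace = 1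

/-- Partial trace over the first tensor factor. -/
noncomputable def traceA {a b : ℕ} (M : Matrix (Fin a × Fin b) (Fin a × Fin b) ℂ) :
    Matrix (Fin b) (Fin b) ℂ :=
  Matrix.of fun j j' => ∑ i, M (i, j) (i, j')

/-- Partial trace over the second tensor factor. -/
noncomputable def traceB {a b : ℕ} (M : Matrix (Fin a × Fin b) (Fin a × Fin b) ℂ) :
    Matrix (Fin a) (Fin a) ℂ :=
  Matrix.of fun i i' => ∑ j, M (i, j) (i', j)

/-- `n`-fold tensor (Kronecker) power of a matrix. -/
noncomputable def tensorPow {d : ℕ} (ϑ : Matrix (Fin d) (Fin d) ℂ) (n : ℕ) :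
    Matrix (Fin n → Fin d) (Fin n → Fin d) ℂ :=
  Matrix.of fun f g => ∏ i, ϑ (f i) (g i)

/-! The positive-part trace of a Hermitian `X` is the maximum of `Re Tr[Q X]` over `0 ≤ Q ≤ 1`,
attained at `Q = {X ≥ 0}`: with the positive matrices `X₊ = {X ≥ 0} X` and
`X₋ = ({X ≥ 0} - 1) X` one has `X = X₊ - X₋`, hence `Tr[Q X] ≤ Tr[Q X₊] ≤ Tr[X₊]`.
For a map `T X = ∑ Kᵢ X Kᵢᴴ` we have `Tr[P T(X)] = Tr[T†(P) X]` with `T†(P) = ∑ Kᵢᴴ P Kᵢ`, which is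
positive and, as `T` is trace preserving, unital. So `Q = T†({T(A) - T(B) ≥ 0})` is admissible
for `X = A - B`. -/

open scoped MatrixOrder

namespace Matrix

variable {n m ι 𝕜 : Type*} [RCLike 𝕜]

section Trace

variable [Fintype n]

theorem PosSemidef.trace_mul_nonneg {A B : Matrix n n 𝕜} (hA : A.PosSemidef) (hB : B.PosSemidef) :
    0 ≤ (A * B).trace := by
  classical
  obtain ⟨C, rfl⟩ := CStarAlgebra.nonneg_iff_eq_star_mul_self.mp hA.nonneg
  rw [star_eq_conjTranspose, Matrix.mul_assoc, trace_mul_comm]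
  exact (hB.mul_mul_conjTranspose_same C).trace_nonneg

theorem trace_mul_sub_le_trace [DecidableEq n] {Q P N : Matrix n n 𝕜} (hQ : 0 ≤ Q) (hQ1 : Q ≤ 1)
    (hP : 0 ≤ P) (hN : 0 ≤ N) : (Q * (P - N)).trace ≤ P.trace := by
  have h1 : 0 ≤ ((1 - Q) * P).trace := PosSemidef.trace_mul_nonneg hQ1 hP.posSemidef
  have h2 : 0 ≤ (Q * N).trace := PosSemidef.trace_mul_nonneg hQ.posSemidef hN.posSemidef
  calc (Q * (P - N)).trace = P.trace - ((1 - Q) * P).trace - (Q * N).trace := by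
        simp only [Matrix.mul_sub, Matrix.sub_mul, Matrix.one_mul, trace_sub]; abel
    _ ≤ P.trace := (sub_le_self _ h2).trans (sub_le_self _ h1)

end Trace

section Kraus

variable [Fintype ι]

def krausMap [Fintype n] (K : ι → Matrix m n 𝕜) (X : Matrix n n 𝕜) : Matrix m m 𝕜 :=
  ∑ i, K i * X * (K i)ᴴ

variable (K : ι → Matrix m n 𝕜)

theorem krausMap_conjTranspose_one [Fintype m] [DecidableEq m] :
    krausMap (fun i => (K i)ᴴ) (1 : Matrix m m 𝕜) = ∑ i, (K i)ᴴ * K i := by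
  simp only [krausMap, Matrix.mul_one, conjTranspose_conjTranspose]

variable [Fintype n]

theorem krausMap_sub (X Y : Matrix n n 𝕜) :
    krausMap K (X - Y) = krausMap K X - krausMap K Y := by
  simp only [krausMap, Matrix.mul_sub, Matrix.sub_mul, Finset.sum_sub_distrib]

theorem IsHermitian.krausMap {X : Matrix n n 𝕜} (hX : X.IsHermitian) :
    (krausMap K X).IsHermitian :=
  isSelfAdjoint_sum _ fun i _ => isHermitian_mul_mul_conjTranspose (K i) hX

variable [Fintype m]

theorem krausMap_nonneg {X : Matrix n n 𝕜} (hX : 0 ≤ X) : 0 ≤ krausMap K X :=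
  Finset.sum_nonneg fun i _ => (hX.posSemidef.mul_mul_conjTranspose_same (K i)).nonneg

theorem krausMap_mono {X Y : Matrix n n 𝕜} (hXY : X ≤ Y) : krausMap K X ≤ krausMap K Y :=
  sub_nonneg.mp (krausMap_sub K Y X ▸ krausMap_nonneg K (sub_nonneg.mpr hXY))

theorem trace_mul_krausMap (Y : Matrix m m 𝕜) (X : Matrix n n 𝕜) :
    (Y * krausMap K X).trace = (krausMap (fun i => (K i)ᴴ) Y * X).trace := by
  simp only [krausMap, Finset.mul_sum, Finset.sum_mul, trace_sum]
  refine Finset.sum_congr rfl fun i _ => ?_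
  rw [conjTranspose_conjTranspose, ← Matrix.mul_assoc, ← Matrix.mul_assoc, trace_mul_comm]
  simp only [Matrix.mul_assoc]

end Kraus

end Matrix

section posProj

variable {n : Type*} [Fintype n] [DecidableEq n] {X : Matrix n n ℂ}

theorem posProj_eq_cfc (hX : X.IsHermitian) :
    posProj X = cfc (fun x : ℝ => if 0 ≤ x then 1 else 0) X := by
  rw [posProj, dif_pos hX, hX.cfc_eq, Matrix.IsHermitian.cfc, Unitary.conjStarAlgAut_apply]
  congr 3
  ext i
  split_ifs <;> simp [*]

theorem posProj_nonneg (hX : X.IsHermitian) : 0 ≤ posProj X := by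
  rw [posProj_eq_cfc hX]
  exact cfc_nonneg fun x _ => by split_ifs <;> norm_num

theorem posProj_le_one (hX : X.IsHermitian) : posProj X ≤ 1 := by
  rw [posProj_eq_cfc hX]
  exact cfc_le_one _ _ fun x _ => by split_ifs <;> norm_num

theorem posProj_mul_nonneg (hX : X.IsHermitian) : 0 ≤ posProj X * X := by
  rw [posProj_eq_cfc hX]
  nth_rw 2 [← cfc_id' ℝ X]
  rw [← cfc_mul _ _ X (X.finite_real_spectrum.continuousOn _)]
  exact cfc_nonneg fun x _ => by split_ifs <;> nlinarith

theorem posProj_sub_one_mul_nonneg (hX : X.IsHermitian) : 0 ≤ (posProj X - 1) * X := by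
  have hcont (f : ℝ → ℝ) : ContinuousOn f (spectrum ℝ X) := X.finite_real_spectrum.continuousOn f
  rw [posProj_eq_cfc hX]
  nth_rw 2 [← cfc_id' ℝ X]
  rw [← cfc_one ℝ X, ← cfc_sub (hf := hcont _) (hg := hcont _),
    ← cfc_mul (hf := hcont _) (hg := hcont _)]
  exact cfc_nonneg fun x _ => by simp only [Pi.one_apply]; split_ifs <;> nlinarith

theorem trace_mul_le_trace_posProj_mul {Q : Matrix n n ℂ} (hX : X.IsHermitian) (hQ : 0 ≤ Q)
    (hQ1 : Q ≤ 1) : (Q * X).trace ≤ (posProj X * X).trace := by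
  have hsplit : X = posProj X * X - (posProj X - 1) * X := by
    rw [Matrix.sub_mul, Matrix.one_mul, sub_sub_cancel]
  conv_lhs => rw [hsplit]
  exact trace_mul_sub_le_trace hQ hQ1 (posProj_mul_nonneg hX) (posProj_sub_one_mul_nonneg hX)

end posProj

theorem positive_part_trace_monotone_cptp {h k m : ℕ}
    (A B : Matrix (Fin h) (Fin h) ℂ) (hA : A.IsHermitian) (hB : B.IsHermitian)
    (K : Fin m → Matrix (Fin k) (Fin h) ℂ)
    (hK : ∑ i, (K i)ᴴ * K i = 1)
    (T : Matrix (Fin h) (Fin h) ℂ → Matrix (Fin k) (Fin k) ℂ)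
    (hT : ∀ X, T X = ∑ i, K i * X * (K i)ᴴ) :
    ((posProj (T A - T B) * (T A - T B)).trace).re
      ≤ ((posProj (A - B) * (A - B)).trace).re := by
  obtain rfl : T = krausMap K := funext hT
  have hX : (A - B).IsHermitian := hA.sub hB
  have hY : (krausMap K (A - B)).IsHermitian := hX.krausMap K
  have hdual_le_one : krausMap (fun i => (K i)ᴴ) (posProj (krausMap K (A - B))) ≤ 1 := by
    rw [← hK, ← krausMap_conjTranspose_one]
    exact krausMap_mono _ (posProj_le_one hY)
  rw [← krausMap_sub, trace_mul_krausMap]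
  exact Complex.re_le_re <| trace_mul_le_trace_posProj_mul hX
    (krausMap_nonneg _ (posProj_nonneg hY)) hdual_le_one
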